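/- arXiv:2502.05949 — 7 statements merged into one kernel-verified Lean document; each statement's English description precedes it below -/
import Mathlib

section
/- In any temporal election, every outcome that provides extended justified representation (EJR) also provides proportional justified representation (PJR). -/
open Finset

/-- Satisfaction of voter `i` under outcome `o`: number of rounds `t` with `o t ∈ s i t`. -/
def sat {V : Type*} {ℓ : ℕ} {P : Type*} [DecidableEq P]
    (s : V → Fin ℓ → Finset P) (o : Fin ℓ → P) (i : V) : ℕ :=
  (univ.filter fun t => o t ∈ s i t).card

/-- Agreement of a group `N'`: number of rounds in which all members approve a common candidate. -/
def agreement {V : Type*} {ℓ : ℕ} {P : Type*} [Fintype P] [DecidableEq P]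
    (s : V → Fin ℓ → Finset P) (N' : Finset V) : ℕ :=
  (univ.filter fun t : Fin ℓ => ∃ p : P, ∀ i ∈ N', p ∈ s i t).card

/-- Demand `α(N') = ⌊β(N')·|N'|/n⌋`. -/
def demand {V : Type*} [Fintype V] {ℓ : ℕ} {P : Type*} [Fintype P] [DecidableEq P]
    (s : V → Fin ℓ → Finset P) (N' : Finset V) : ℕ :=
  agreement s N' * N'.card / Fintype.card V

/-- Outcome `o` provides extended justified representation. -/
def EJR {V : Type*} [Fintype V] [DecidableEq V] {ℓ : ℕ} {P : Type*} [Fintype P] [DecidableEq P]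
    (s : V → Fin ℓ → Finset P) (o : Fin ℓ → P) : Prop :=
  ∀ N' : Finset V, N'.Nonempty → ∃ i ∈ N', demand s N' ≤ sat s o i

/-- Outcome `o` provides proportional justified representation. -/
def PJR {V : Type*} [Fintype V] [DecidableEq V] {ℓ : ℕ} {P : Type*} [Fintype P] [DecidableEq P]
    (s : V → Fin ℓ → Finset P) (o : Fin ℓ → P) : Prop :=
  ∀ N' : Finset V,
    demand s N' ≤ (univ.filter fun t : Fin ℓ => ∃ i ∈ N', o t ∈ s i t).card

/-- every outcome providing EJR also provides PJR. -/
theorem ejr_implies_pjr {n ℓ : ℕ} {P : Type*} [Fintype P] [DecidableEq P]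
    (s : Fin n → Fin ℓ → Finset P) (o : Fin ℓ → P)
    (h : EJR s o) : PJR s o := by
  intro N'
  rcases N'.eq_empty_or_nonempty with rfl | hne
  · simp [demand]
  · obtain ⟨i, hi, hsat⟩ := h N' hne
    refine hsat.trans (Finset.card_le_card ?_)
    intro t ht
    simp only [mem_filter, mem_univ, true_and] at ht ⊢
    exact ⟨i, hi, ht⟩
end

section
/- There exists a temporal election in which, for the modified demand ᾱ(N') = min{β(N'), ℓ·|N'|/n}, no outcome satisfies the modified JR axiom: for every outcome o there is a group N' with ᾱ(N') ≥ 1 such that sat_i(o) = 0 for all i ∈ N'. Concretely, take 6 voters, candidates {x_T : T a 2-element subset of N} ∪ {y_1,...,y_6}, ℓ = 3 rounds, with s_{i,1} = {x_T : i ∈ T} and s_{i,2} = s_{i,3} = {y_i} for each voter i; then every pair of voters N' has β(N') = 1 and ℓ·|N'|/n = 1, yet for every outcome there is a pair of voters both with satisfaction 0. -/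
open Finset

/-- Outcome `o` provides justified representation. -/
def JR {V : Type*} [Fintype V] [DecidableEq V] {ℓ : ℕ} {P : Type*} [Fintype P] [DecidableEq P]
    (s : V → Fin ℓ → Finset P) (o : Fin ℓ → P) : Prop :=
  ∀ N' : Finset V, 0 < demand s N' → ∃ i ∈ N', 0 < sat s o i

/-- The election of the example: 6 voters, candidates `x_T` for 2-element subsets `T`
(encoded as `Sum.inl T`) and `y_1,…,y_6` (encoded as `Sum.inr i`), 3 rounds. -/
def s6 : Fin 6 → Fin 3 → Finset (Finset (Fin 6) ⊕ Fin 6) :=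
  fun i t =>
    if t = 0 then (univ.filter fun T : Finset (Fin 6) => i ∈ T ∧ T.card = 2).image Sum.inl
    else {Sum.inr i}

/-!
A candidate `x_T` of the first round is approved only by the two voters in `T`, and a candidate
of a later round by at most one voter, so every outcome satisfies at most `2 + 1 + 1 = 4` of the
six voters. Two voters `a ≠ b` are then left with satisfaction `0`, although they agree on
`x_{a,b}` in the first round and `ℓ·|N'|/n = 3·2/6 = 1`.
-/

section Election

variable {V : Type*} {ℓ : ℕ} {P : Type*} [DecidableEq P] (s : V → Fin ℓ → Finset P)

theorem card_sat_ne_zero_le_sum [Fintype V] [DecidableEq V] (o : Fin ℓ → P) :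
    #{i | sat s o i ≠ 0} ≤ ∑ t, #{i | o t ∈ s i t} := by
  have hsub : ({i | sat s o i ≠ 0} : Finset V) ⊆ univ.biUnion fun t => {i | o t ∈ s i t} := by
    intro i hi
    obtain ⟨t, ht⟩ := card_ne_zero.mp (mem_filter.mp hi).2
    exact mem_biUnion.mpr ⟨t, mem_univ t, by simpa using ht⟩
  exact (card_le_card hsub).trans card_biUnion_le

theorem card_sub_sum_le_card_sat_eq_zero [Fintype V] [DecidableEq V] {c : Fin ℓ → ℕ}
    (hc : ∀ t p, #{i | p ∈ s i t} ≤ c t) (o : Fin ℓ → P) :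
    Fintype.card V - ∑ t, c t ≤ #{i | sat s o i = 0} := by
  have hsplit := card_filter_add_card_filter_not (s := univ) fun i => sat s o i = 0
  have hpos := (card_sat_ne_zero_le_sum s o).trans (sum_le_sum fun t _ => hc t (o t))
  rw [card_univ] at hsplit
  simp only [ne_eq] at hpos
  omega

theorem one_le_agreement [Fintype P] {N' : Finset V} {t : Fin ℓ} {p : P}
    (hp : ∀ i ∈ N', p ∈ s i t) : 1 ≤ agreement s N' :=
  card_pos.mpr ⟨t, mem_filter.mpr ⟨mem_univ t, p, hp⟩⟩

end Election

theorem inl_mem_s6_zero {i : Fin 6} {T : Finset (Fin 6)} :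
    Sum.inl T ∈ s6 i 0 ↔ i ∈ T ∧ T.card = 2 := by
  simp [s6]

theorem s6_eq_singleton_of_ne_zero (i : Fin 6) {t : Fin 3} (ht : t ≠ 0) : s6 i t = {Sum.inr i} :=
  if_neg ht

theorem card_supporters_s6_zero_le_two (p : Finset (Fin 6) ⊕ Fin 6) :
    #{i | p ∈ s6 i 0} ≤ 2 := by
  rcases p with T | j
  · by_cases hT : T.card = 2
    · calc #{i | Sum.inl T ∈ s6 i 0} ≤ T.card :=
            card_le_card fun i hi => (inl_mem_s6_zero.mp (mem_filter.mp hi).2).1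
        _ = 2 := hT
    · simp [inl_mem_s6_zero, hT]
  · simp [s6]

theorem card_supporters_s6_le_one {t : Fin 3} (ht : t ≠ 0) (p : Finset (Fin 6) ⊕ Fin 6) :
    #{i | p ∈ s6 i t} ≤ 1 :=
  card_le_one.mpr fun a ha b hb => by
    simp only [mem_filter, s6_eq_singleton_of_ne_zero _ ht, mem_singleton] at ha hb
    exact Sum.inr_injective (ha.2.symm.trans hb.2)

/-- in this election, for every outcome there is a group `N'` (a pair of voters)
with modified demand `ᾱ(N') = min{β(N'), ℓ·|N'|/n} ≥ 1` in which every voter has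
satisfaction 0; hence the modified JR axiom is unsatisfiable. -/
theorem modified_jr_unsatisfiable :
    ∀ o : Fin 3 → Finset (Fin 6) ⊕ Fin 6,
      ∃ N' : Finset (Fin 6), N'.card = 2 ∧
        (1 : ℚ) ≤ min ((agreement s6 N' : ℚ)) ((3 * N'.card : ℚ) / 6) ∧
        ∀ i ∈ N', sat s6 o i = 0 := by
  intro o
  have hbound : ∀ t p, #{i | p ∈ s6 i t} ≤ ![2, 1, 1] t := by
    intro t p
    fin_cases t
    exacts [card_supporters_s6_zero_le_two p, card_supporters_s6_le_one (by decide) p,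
      card_supporters_s6_le_one (by decide) p]
  have htwo : 2 ≤ #{i | sat s6 o i = 0} := by
    simpa [Fin.sum_univ_three] using card_sub_sum_le_card_sat_eq_zero s6 hbound o
  obtain ⟨a, ha, b, hb, hab⟩ := one_lt_card.mp htwo
  refine ⟨{a, b}, card_pair hab, le_min ?_ ?_, ?_⟩
  · exact_mod_cast one_le_agreement s6 (t := 0) fun i hi =>
      inl_mem_s6_zero.mpr ⟨hi, card_pair hab⟩
  · rw [card_pair hab]
    norm_num
  · simp only [mem_insert, mem_singleton]
    rintro i (rfl | rfl)
    exacts [(mem_filter.mp ha).2, (mem_filter.mp hb).2]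
end

section
/- Let E be a temporal election with |P| = 2 in which every approval set s_{i,t} is non-empty, and let o be an outcome. If a group N' witnesses a JR violation (α(N') > 0 and sat_i(o) = 0 for all i ∈ N'), then every voter in N' is grumpy, i.e., approves in each round exactly the one candidate that is not o_t; consequently o fails JR if and only if the set G of grumpy voters satisfies ⌊ℓ·|G|/n⌋ > 0. -/
open Finset

/-- A voter is grumpy if in every round she approves exactly the single candidate
different from the selected one. -/
def Grumpy {V : Type*} {ℓ : ℕ} {P : Type*} [DecidableEq P]
    (s : V → Fin ℓ → Finset P) (o : Fin ℓ → P) (i : V) : Prop :=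
  ∀ t : Fin ℓ, (s i t).card = 1 ∧ o t ∉ s i t

instance {V : Type*} {ℓ : ℕ} {P : Type*} [DecidableEq P]
    (s : V → Fin ℓ → Finset P) (o : Fin ℓ → P) : DecidablePred (Grumpy s o) := fun i =>
  inferInstanceAs (Decidable (∀ t : Fin ℓ, (s i t).card = 1 ∧ o t ∉ s i t))


/-- Auxiliary: the filter underlying `agreement`, in the same generic context so the
decidability instance matches definitionally. -/
def agreementFilter {V : Type*} {ℓ : ℕ} {P : Type*} [Fintype P] [DecidableEq P]
    (s : V → Fin ℓ → Finset P) (N' : Finset V) : Finset (Fin ℓ) :=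
  univ.filter fun t : Fin ℓ => ∃ p : P, ∀ i ∈ N', p ∈ s i t

lemma agreement_eq_card_agreementFilter {V : Type*} {ℓ : ℕ} {P : Type*} [Fintype P]
    [DecidableEq P] (s : V → Fin ℓ → Finset P) (N' : Finset V) :
    agreement s N' = (agreementFilter s N').card := rfl

lemma mem_agreementFilter {V : Type*} {ℓ : ℕ} {P : Type*} [Fintype P] [DecidableEq P]
    {s : V → Fin ℓ → Finset P} {N' : Finset V} {t : Fin ℓ} :
    t ∈ agreementFilter s N' ↔ ∃ p : P, ∀ i ∈ N', p ∈ s i t := by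
  simp [agreementFilter]

/-- with two candidates and non-empty approval sets, every voter in a group
witnessing a JR violation is grumpy, and `o` fails JR iff `⌊ℓ·|G|/n⌋ > 0` for the set `G`
of grumpy voters. -/
theorem jr_iff_grumpy_nonempty {n ℓ : ℕ} (hn : 0 < n)
    (s : Fin n → Fin ℓ → Finset (Fin 2)) (hne : ∀ i t, (s i t).Nonempty)
    (o : Fin ℓ → Fin 2) :
    (∀ N' : Finset (Fin n), 0 < demand s N' → (∀ i ∈ N', sat s o i = 0) →
      ∀ i ∈ N', Grumpy s o i) ∧
    (¬ JR s o ↔ 0 < ℓ * (univ.filter (Grumpy s o)).card / n) := by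
  have fin2 : ∀ x y : Fin 2, x ≠ y → x = y + 1 := by decide
  have key : ∀ i, sat s o i = 0 → Grumpy s o i := by
    intro i h t
    have ho : ∀ u, o u ∉ s i u := by
      intro u hu
      have hmem : u ∈ univ.filter fun t => o t ∈ s i t := by simp [hu]
      have := Finset.card_pos.mpr ⟨u, hmem⟩
      simp only [sat] at h
      omega
    refine ⟨?_, ho t⟩
    have hsub : s i t ⊆ {o t + 1} := by
      intro x hx
      simp only [Finset.mem_singleton]
      exact fin2 x (o t) (fun h' => ho t (h' ▸ hx))
    have h1 : (s i t).card ≤ 1 := le_trans (Finset.card_le_card hsub) (by simp)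
    have h2 : 1 ≤ (s i t).card := Finset.card_pos.mpr (hne i t)
    omega
  have sat_zero : ∀ i, Grumpy s o i → sat s o i = 0 := by
    intro i hg
    simp only [sat, Finset.card_eq_zero, Finset.filter_eq_empty_iff]
    intro t _
    exact (hg t).2
  refine ⟨fun N' _ hsat i hi => key i (hsat i hi), ?_, ?_⟩
  · intro hJR
    simp only [JR, not_forall] at hJR
    obtain ⟨N', hd, hsat⟩ := hJR
    push_neg at hsat
    have hsub : N' ⊆ univ.filter (Grumpy s o) := by
      intro i hi
      simp only [Finset.mem_filter, Finset.mem_univ, true_and]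
      exact key i (Nat.le_zero.mp (hsat i hi))
    have hagree : agreement s N' ≤ ℓ :=
      le_trans (Finset.card_le_univ _) (by simp)
    have hcard : N'.card ≤ (univ.filter (Grumpy s o)).card := Finset.card_le_card hsub
    have h1 : n ≤ agreement s N' * N'.card := by
      by_contra hlt
      push_neg at hlt
      simp only [demand, Fintype.card_fin] at hd
      rw [Nat.div_eq_of_lt hlt] at hd
      exact absurd hd (lt_irrefl 0)
    have h2 : n ≤ ℓ * (univ.filter (Grumpy s o)).card :=
      h1.trans (Nat.mul_le_mul hagree hcard)
    exact Nat.div_pos h2 hn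
  · intro hpos
    set G := univ.filter (Grumpy s o) with hG
    have hagree : agreement s G = ℓ := by
      rw [agreement_eq_card_agreementFilter]
      refine le_antisymm (le_trans (Finset.card_le_univ _) (by simp)) ?_
      refine le_trans (by simp : ℓ ≤ (univ : Finset (Fin ℓ)).card) (Finset.card_le_card ?_)
      intro t _
      refine mem_agreementFilter.mpr ⟨o t + 1, fun i hi => ?_⟩
      simp only [hG, Finset.mem_filter] at hi
      have hg := hi.2 t
      obtain ⟨x, hx⟩ := hne i t
      have hx1 : x = o t + 1 := fin2 x (o t) (fun h' => hg.2 (h' ▸ hx))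
      exact hx1 ▸ hx
    intro hJR
    have hd : 0 < demand s G := by
      simp only [demand, hagree, Fintype.card_fin]
      exact hpos
    obtain ⟨i, hi, hsat⟩ := hJR G hd
    simp only [hG, Finset.mem_filter] at hi
    rw [sat_zero i hi.2] at hsat
    exact absurd hsat (lt_irrefl 0)
end

section
/- Let E be a temporal election and o an outcome. Suppose that for every possible outcome o', every set of rounds T ⊆ [ℓ], and every r, the set N^r_{o',T} consisting of the r voters of N_{o',T} = {i : o'_t ∈ s_{i,t} for all t ∈ T} with smallest satisfaction under o contains some voter i with sat_i(o) ≥ ⌊(r/n)·|T|⌋. Then o provides EJR. Conversely, if o provides EJR then all these checks pass. -/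
open Finset

lemma exists_prefix_set {V : Type*} [DecidableEq V] (f : V → ℕ) (A : Finset V) :
    ∀ k ≤ A.card, ∃ S ⊆ A, S.card = k ∧ ∀ i ∈ S, ∀ j ∈ A, j ∉ S → f i ≤ f j := by
  intro k
  induction k with
  | zero => exact fun _ => ⟨∅, Finset.empty_subset _, rfl, by simp⟩
  | succ k ih =>
    intro hk
    obtain ⟨S, hSA, hcard, hmin⟩ := ih (Nat.le_of_lt (Nat.lt_of_succ_le hk))
    have hne : (A \ S).Nonempty := by
      rw [Finset.sdiff_nonempty]
      intro hAS
      have h1 := Finset.card_le_card hAS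
      omega
    obtain ⟨j, hjA, hjmin⟩ := Finset.exists_min_image (A \ S) f hne
    have hjS : j ∉ S := (Finset.mem_sdiff.mp hjA).2
    refine ⟨insert j S, ?_, ?_, ?_⟩
    · exact Finset.insert_subset (Finset.mem_sdiff.mp hjA).1 hSA
    · rw [Finset.card_insert_of_notMem hjS, hcard]
    · intro i hi x hxA hxS
      have hx' : x ∈ A \ S := Finset.mem_sdiff.mpr ⟨hxA, fun h => hxS (Finset.mem_insert_of_mem h)⟩
      rcases Finset.mem_insert.mp hi with rfl | hiS
      · exact hjmin x hx'
      · exact hmin i hiS x hxA (fun h => hxS (Finset.mem_insert_of_mem h))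

/-- `o` provides EJR iff for every potential outcome `o'`, every set of
rounds `T`, and every set `S` consisting of (for some tie-breaking) the `|S|` voters of
`N_{o',T} = {i : o' t ∈ s i t for all t ∈ T}` with smallest satisfaction under `o`,
some voter of `S` has satisfaction at least `⌊|S|·|T|/n⌋`. -/
theorem ejr_iff_prefix_checks {n ℓ : ℕ} {P : Type*} [Fintype P] [DecidableEq P]
    (s : Fin n → Fin ℓ → Finset P) (o : Fin ℓ → P) :
    EJR s o ↔
      ∀ (o' : Fin ℓ → P) (T : Finset (Fin ℓ)) (S : Finset (Fin n)),
        S ⊆ (univ.filter fun i => ∀ t ∈ T, o' t ∈ s i t) →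
        (∀ i ∈ S, ∀ j ∈ (univ.filter fun i => ∀ t ∈ T, o' t ∈ s i t),
          j ∉ S → sat s o i ≤ sat s o j) →
        S.Nonempty →
        ∃ i ∈ S, S.card * T.card / n ≤ sat s o i := by
  constructor
  · intro hEJR o' T S hS hmin hSne
    obtain ⟨i, hiS, hi⟩ := hEJR S hSne
    refine ⟨i, hiS, le_trans ?_ hi⟩
    have hT : T.card ≤ agreement s S := by
      apply Finset.card_le_card
      intro t ht
      simp only [agreement, Finset.mem_filter, Finset.mem_univ, true_and]
      exact ⟨o' t, fun i hiS => by
        have := hS hiS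
        simp only [Finset.mem_filter] at this
        exact this.2 t ht⟩
    simp only [demand, Fintype.card_fin]
    calc S.card * T.card / n = T.card * S.card / n := by rw [Nat.mul_comm]
      _ ≤ agreement s S * S.card / n :=
        Nat.div_le_div_right (Nat.mul_le_mul_right _ hT)
  · intro h N' hN'
    set T : Finset (Fin ℓ) := univ.filter (fun t => ∃ p : P, ∀ i ∈ N', p ∈ s i t) with hTdef
    have hagree : agreement s N' = T.card := by rw [hTdef]; unfold agreement; convert rfl
    have hdem : demand s N' = T.card * N'.card / n := by
      simp [demand, Fintype.card_fin, hagree]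
    rcases T.eq_empty_or_nonempty with hTe | hTne
    · obtain ⟨i, hi⟩ := hN'
      exact ⟨i, hi, by simp [hdem, hTe]⟩
    · have hPne : Nonempty P := by
        obtain ⟨t, ht⟩ := hTne
        simp only [hTdef, Finset.mem_filter] at ht
        obtain ⟨p, _⟩ := ht.2
        exact ⟨p⟩
      let o' : Fin ℓ → P := fun t =>
        if h : ∃ p : P, ∀ i ∈ N', p ∈ s i t then h.choose else Classical.arbitrary P
      set A : Finset (Fin n) := univ.filter (fun i => ∀ t ∈ T, o' t ∈ s i t) with hAdef
      have hN'A : N' ⊆ A := by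
        intro i hi
        simp only [hAdef, Finset.mem_filter, Finset.mem_univ, true_and]
        intro t ht
        simp only [hTdef, Finset.mem_filter] at ht
        have hex := ht.2
        have : o' t = hex.choose := dif_pos hex
        rw [this]
        exact hex.choose_spec i hi
      obtain ⟨S, hSA, hScard, hSmin⟩ :=
        exists_prefix_set (sat s o) A N'.card (Finset.card_le_card hN'A)
      obtain ⟨i, hiS, hi⟩ := h o' T S hSA hSmin (Finset.card_pos.mp (hScard ▸ Finset.card_pos.mpr hN'))
      rw [hScard] at hi
      have hdem' : demand s N' ≤ sat s o i := by
        rw [hdem, Nat.mul_comm]; exact hi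
      by_cases hiN' : i ∈ N'
      · exact ⟨i, hiN', hdem'⟩
      · have : ∃ j ∈ N', j ∉ S := by
          by_contra hc
          push_neg at hc
          have hsub : N' ⊆ S := hc
          have : N' = S := Finset.eq_of_subset_of_card_le hsub (le_of_eq hScard)
          exact hiN' (this ▸ hiS)
        obtain ⟨j, hjN', hjS⟩ := this
        exact ⟨j, hjN', le_trans hdem' (hSmin i hiS j (hN'A hjN') hjS)⟩
end

section
/- Let E be a monotonic temporal election and o an outcome. For p ∈ P, t ∈ [ℓ], let N_{p,t} = {i ∈ N : p ∈ s_{i,t}} and let N^z_{p,t} be the z voters of N_{p,t} with smallest satisfaction under o. Then o provides EJR if and only if for all p ∈ P, t ∈ [ℓ], and z ∈ {1,...,|N_{p,t}|}, some voter i ∈ N^z_{p,t} satisfies sat_i(o) ≥ α(N^z_{p,t}). -/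
open Finset

/-- For any finset `T`, function `f` and `z ≤ |T|`, there is a subset of `T` of size `z`
consisting of `z` elements with smallest `f`-value. -/
lemma exists_min_sat_subset {V : Type*} [DecidableEq V] (f : V → ℕ) (T : Finset V) :
    ∀ z, z ≤ T.card →
      ∃ S, S ⊆ T ∧ S.card = z ∧ ∀ i ∈ S, ∀ j ∈ T, j ∉ S → f i ≤ f j := by
  intro z
  induction z with
  | zero => exact fun _ => ⟨∅, by simp⟩
  | succ z ih =>
    intro hz
    obtain ⟨S, hSsub, hScard, hSmin⟩ := ih (Nat.le_of_succ_le hz)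
    have hdiff : (T \ S).Nonempty := by
      rw [← Finset.card_pos, Finset.card_sdiff_of_subset hSsub]
      omega
    obtain ⟨j, hjmem, hjmin⟩ := Finset.exists_min_image (T \ S) f hdiff
    obtain ⟨hjT, hjS⟩ := Finset.mem_sdiff.mp hjmem
    refine ⟨insert j S, Finset.insert_subset hjT hSsub, ?_, ?_⟩
    · rw [Finset.card_insert_of_notMem hjS, hScard]
    · intro i hi k hkT hkS
      have hkS' : k ∉ S := fun h => hkS (Finset.mem_insert_of_mem h)
      rcases Finset.mem_insert.mp hi with rfl | hiS
      · exact hjmin k (Finset.mem_sdiff.mpr ⟨hkT, hkS'⟩)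
      · exact hSmin i hiS k hkT hkS'

/-- in a monotonic election, `o` provides EJR iff for every candidate `p`,
round `t`, and every set `S` consisting of (for some tie-breaking) the `|S|` voters of
`N_{p,t} = {i : p ∈ s i t}` with smallest satisfaction under `o`, some voter of `S`
has satisfaction at least `α(S)`. -/
theorem monotonic_ejr_iff_checks {n ℓ : ℕ} {P : Type*} [Fintype P] [DecidableEq P]
    (s : Fin n → Fin ℓ → Finset P)
    (hmono : ∀ (i : Fin n) (t t' : Fin ℓ), t ≤ t' → s i t ⊆ s i t')
    (o : Fin ℓ → P) :
    EJR s o ↔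
      ∀ (p : P) (t : Fin ℓ) (S : Finset (Fin n)),
        S ⊆ (univ.filter fun i => p ∈ s i t) →
        (∀ i ∈ S, ∀ j ∈ (univ.filter fun i => p ∈ s i t),
          j ∉ S → sat s o i ≤ sat s o j) →
        S.Nonempty →
        ∃ i ∈ S, demand s S ≤ sat s o i := by
  constructor
  · intro h p t S _ _ hne
    exact h S hne
  · intro h N' hne
    by_cases hd : demand s N' = 0
    · obtain ⟨i, hi⟩ := hne
      exact ⟨i, hi, by omega⟩
    · have hag : 0 < agreement s N' := by
        by_contra hc
        exact hd (by simp [demand, Nat.le_zero.mp (Nat.not_lt.mp hc)])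
      have hPne : ∃ t : Fin ℓ, ∃ p : P, ∀ i ∈ N', p ∈ s i t := by
        unfold agreement at hag
        obtain ⟨t, ht⟩ := Finset.card_pos.mp hag
        simp only [Finset.mem_filter, Finset.mem_univ, true_and] at ht
        exact ⟨t, ht⟩
      obtain ⟨t0, ht0P, ht0min⟩ :
          ∃ t0 : Fin ℓ, (∃ p : P, ∀ i ∈ N', p ∈ s i t0) ∧
            ∀ t : Fin ℓ, (∃ p : P, ∀ i ∈ N', p ∈ s i t) → t0 ≤ t := by
        obtain ⟨t, ht⟩ := hPne
        obtain ⟨t0, ht0, hmin⟩ := Finset.exists_min_image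
          (univ.filter fun t : Fin ℓ => ∃ p : P, ∀ i ∈ N', p ∈ s i t) id
          ⟨t, by simp [ht]⟩
        refine ⟨t0, by simpa using ht0, fun u hu => hmin u (by simp [hu])⟩
      obtain ⟨p0, hp0⟩ := ht0P
      have hsubNp : N' ⊆ (univ.filter fun i => p0 ∈ s i t0) := fun i hi =>
        Finset.mem_filter.mpr ⟨Finset.mem_univ i, hp0 i hi⟩
      have hzle : N'.card ≤ (univ.filter fun i => p0 ∈ s i t0).card :=
        Finset.card_le_card hsubNp
      obtain ⟨S, hSsub, hScard, hSmin⟩ :=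
        exists_min_sat_subset (sat s o) (univ.filter fun i => p0 ∈ s i t0) N'.card hzle
      have hSne : S.Nonempty := Finset.card_pos.mp (hScard ▸ Finset.card_pos.mpr hne)
      obtain ⟨i, hiS, hisat⟩ := h p0 t0 S hSsub hSmin hSne
      have hagle : agreement s N' ≤ agreement s S := by
        unfold agreement
        apply Finset.card_le_card
        intro t ht
        simp only [Finset.mem_filter, Finset.mem_univ, true_and] at ht ⊢
        refine ⟨p0, fun j hj => ?_⟩
        exact hmono j t0 t (ht0min t ht) (Finset.mem_filter.mp (hSsub hj)).2
      have hdle : demand s N' ≤ demand s S := by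
        unfold demand
        exact Nat.div_le_div_right (Nat.mul_le_mul hagle (le_of_eq hScard.symm))
      by_cases hiN : i ∈ N'
      · exact ⟨i, hiN, le_trans hdle hisat⟩
      · have : ∃ j ∈ N', j ∉ S := by
          by_contra hc
          push_neg at hc
          have : N' = S := Finset.eq_of_subset_of_card_le hc (le_of_eq hScard)
          exact hiN (this ▸ hiS)
        obtain ⟨j, hjN, hjS⟩ := this
        have hsat := hSmin i hiS j (hsubNp hjN) hjS
        exact ⟨j, hjN, le_trans hdle (le_trans hisat hsat)⟩
end

section
/- Consider the temporal election with n = 2k voters (k ≥ 4), candidates {p_1,...,p_n}, and n rounds, where voter i ∈ [k] approves {p_i} in rounds 1..k and {p_n} in rounds k+1..n, and voter i ∈ {k+1,...,n} approves {p_i} in rounds 1..k and {p_{i−k}} in rounds k+1..n. If an outcome o selects o_t = p_t for t ∈ [k] in the first k rounds and selects each of p_1,...,p_k exactly once in the last k rounds, then o fails EJR: the group N'' = [k] has β(N'') = k and α(N'') = k/2 ≥ 2, but sat_i(o) = 1 for every i ∈ [k]. -/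
open Finset

/-- The election of the semi-online impossibility proof: `n = 2k` voters, `n` candidates
`p_1, …, p_n` (0-indexed as `Fin (2*k)`), and `n` rounds. Voter `i < k` approves `p_{i+1}`
in the first `k` rounds and `p_n` afterwards; voter `i ≥ k` approves `p_{i+1}` in the first
`k` rounds and `p_{i+1-k}` afterwards. -/
def semiOnlineElection (k : ℕ) (hk : 0 < k) : Fin (2 * k) → Fin (2 * k) → Finset (Fin (2 * k)) :=
  fun i t =>
    if t.val < k then {i}
    else if i.val < k then {Fin.mk (2 * k - 1) (by omega)}
    else {Fin.mk (i.val - k) (Nat.lt_of_le_of_lt (Nat.sub_le _ _) i.isLt)}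

lemma card_filter_iff {α : Type*} (s : Finset α) (p q : α → Prop)
    (hp : DecidablePred p) (hq : DecidablePred q) (h : ∀ a, p a ↔ q a) :
    (@Finset.filter α p hp s).card = (@Finset.filter α q hq s).card := by
  congr 1
  ext a
  simp only [Finset.mem_filter]
  exact and_congr_right fun _ => h a

set_option maxHeartbeats 1000000 in
/-- if an outcome selects `o_t = p_t` in each of the first `k` rounds and
selects each of `p_1, …, p_k` exactly once in the last `k` rounds, then the group
`N'' = [k]` has `β(N'') = k`, `α(N'') = k/2 ≥ 2`, yet every voter of `N''` has
satisfaction `1`; hence the outcome fails EJR. -/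
theorem semi_online_fails_ejr {k : ℕ} (hk : 4 ≤ k)
    (o : Fin (2 * k) → Fin (2 * k))
    (h1 : ∀ t : Fin (2 * k), t.val < k → o t = t)
    (h2 : ∀ t : Fin (2 * k), k ≤ t.val → (o t).val < k)
    (h3 : ∀ t t' : Fin (2 * k), k ≤ t.val → k ≤ t'.val → o t = o t' → t = t') :
    agreement (semiOnlineElection k (by omega)) (univ.filter fun i : Fin (2 * k) => i.val < k) = k ∧
    demand (semiOnlineElection k (by omega)) (univ.filter fun i : Fin (2 * k) => i.val < k) = k / 2 ∧
    2 ≤ demand (semiOnlineElection k (by omega)) (univ.filter fun i : Fin (2 * k) => i.val < k) ∧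
    (∀ i : Fin (2 * k), i.val < k → sat (semiOnlineElection k (by omega)) o i = 1) ∧
    ¬ EJR (semiOnlineElection k (by omega)) o := by
  have hk2 : k < 2 * k := by omega
  set N'' : Finset (Fin (2 * k)) := univ.filter fun i : Fin (2 * k) => i.val < k with hN
  have hcardlt : ((univ : Finset (Fin (2 * k))).filter fun t => t.val < k).card = k := by
    have : ((univ : Finset (Fin (2 * k))).filter fun t => t.val < k) = Finset.Iio ⟨k, hk2⟩ := by
      ext t; simp [Fin.lt_def]
    rw [this, Fin.card_Iio]
  have hcardN : N''.card = k := hcardlt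
  have hset : ∀ (h : 0 < k) (t : Fin (2 * k)),
      (∃ p : Fin (2 * k), ∀ i ∈ N'', p ∈ semiOnlineElection k h i t) ↔ ¬ t.val < k := by
    intro h t
    simp only [hN, mem_filter, mem_univ, true_and]
    constructor
    · rintro ⟨p, hp⟩
      intro ht
      have h0 := hp ⟨0, by omega⟩ (by simp; omega)
      have h1' := hp ⟨1, by omega⟩ (by simp; omega)
      simp [semiOnlineElection, ht] at h0 h1'
      rw [h0] at h1'
      exact absurd (congrArg Fin.val h1') (by simp)
    · intro ht
      refine ⟨⟨2 * k - 1, by omega⟩, fun i hi => ?_⟩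
      simp [semiOnlineElection, ht, hi]
  have hagree : ∀ h : 0 < k, agreement (semiOnlineElection k h) N'' = k := by
    intro h
    unfold agreement
    refine (card_filter_iff _ _ (fun t : Fin (2 * k) => ¬ t.val < k) _
      inferInstance (hset h)).trans ?_
    rw [filter_not, card_sdiff_of_subset (filter_subset _ _), card_univ, Fintype.card_fin, hcardlt]
    omega
  have hdem : ∀ h : 0 < k, demand (semiOnlineElection k h) N'' = k / 2 := by
    intro h
    unfold demand
    rw [hagree h, hcardN, Fintype.card_fin, show 2 * k = k * 2 by ring,
      Nat.mul_div_mul_left _ _ (by omega : 0 < k)]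
  have hsat : ∀ (h : 0 < k) (i : Fin (2 * k)), i.val < k →
      sat (semiOnlineElection k h) o i = 1 := by
    intro h i hi
    have hs : ∀ t : Fin (2 * k), (o t ∈ semiOnlineElection k h i t) ↔ t = i := by
      intro t
      constructor
      · intro ht
        by_cases htk : t.val < k
        · rw [h1 t htk] at ht
          simp [semiOnlineElection, htk] at ht
          exact ht
        · simp [semiOnlineElection, htk, hi] at ht
          have hlt := h2 t (by omega)
          have : (o t).val = 2 * k - 1 := by rw [ht]
          omega
      · rintro rfl
        rw [h1 _ hi]
        simp [semiOnlineElection, hi]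
    unfold sat
    refine (card_filter_iff _ _ (fun t : Fin (2 * k) => t = i) _
      inferInstance hs).trans ?_
    rw [Finset.filter_eq', if_pos (mem_univ i), card_singleton]
  refine ⟨hagree _, hdem _, ?_, hsat _, ?_⟩
  · rw [hdem (by omega)]; omega
  · intro hEJR
    obtain ⟨i, hiN, hle⟩ := hEJR N'' ⟨⟨0, by omega⟩, by simp [hN]; omega⟩
    simp only [hN, mem_filter, mem_univ, true_and] at hiN
    rw [hsat (by omega) i hiN] at hle
    rw [hdem (by omega)] at hle
    omega
end

section
/- In the election of the Maximum Edge Biclique reduction — bipartite graph G = (L ∪ R, E) with L = {v_1,...,v_ν}, R = {u_1,...,u_λ}, parameter κ > ν + λ; voters N = [ν] ∪ N_0 with |N_0| = κ − ν; candidates {p,q}; ℓ = λ rounds; s_{i,t} = {p} if {v_i,u_t} ∈ E and ∅ otherwise for i ∈ [ν]; s_{i,t} = {q} for i ∈ N_0 — the outcome o = (q,...,q) fails to provide JR if and only if G contains a biclique with at least κ edges (i.e., there exist L' ⊆ L, R' ⊆ R with all pairs adjacent and |L'|·|R'| ≥ κ). -/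
open Finset

/-- The election of the Maximum Edge Biclique reduction: voters `[ν] ⊕ N_0` with
`|N_0| = κ - ν`, candidates `p, q` encoded as `0, 1 : Fin 2`, `ℓ = λ` rounds; voter
`i ∈ [ν]` approves `p` in round `t` iff `{v_i, u_t} ∈ E`, and voters of `N_0` always
approve `q`. -/
def bicliqueElection {ν lam : ℕ} (κ : ℕ) (E : Fin ν → Fin lam → Prop)
    [∀ i t, Decidable (E i t)] :
    (Fin ν ⊕ Fin (κ - ν)) → Fin lam → Finset (Fin 2)
  | Sum.inl i => fun t => if E i t then {0} else ∅
  | Sum.inr _ => fun _ => {1}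

set_option maxHeartbeats 1000000 in
/-- in the biclique-reduction election with `κ > ν + λ`, the outcome
`(q, …, q)` fails to provide JR iff the bipartite graph contains a biclique with at
least `κ` edges. -/
theorem const_q_fails_jr_iff_biclique {ν lam κ : ℕ} (hκ : ν + lam < κ)
    (E : Fin ν → Fin lam → Prop) [∀ i t, Decidable (E i t)] :
    ¬ JR (bicliqueElection κ E) (fun _ => (1 : Fin 2)) ↔
      ∃ (L' : Finset (Fin ν)) (R' : Finset (Fin lam)),
        (∀ i ∈ L', ∀ t ∈ R', E i t) ∧ κ ≤ L'.card * R'.card := by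
  classical
  have hνκ : ν ≤ κ := le_of_lt (lt_of_le_of_lt (Nat.le_add_right _ _) hκ)
  have hκ0 : 0 < κ := lt_of_le_of_lt (Nat.zero_le _) hκ
  have hcard : Fintype.card (Fin ν ⊕ Fin (κ - ν)) = κ := by
    simp [Nat.add_sub_cancel' hνκ]
  have hsat0 : ∀ i : Fin ν,
      sat (bicliqueElection κ E) (fun _ => (1 : Fin 2)) (Sum.inl i) = 0 := by
    intro i
    simp only [sat, Finset.card_eq_zero, Finset.filter_eq_empty_iff]
    intro t _
    simp only [bicliqueElection]
    split <;> simp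
  have hsat1 : ∀ j : Fin (κ - ν),
      sat (bicliqueElection κ E) (fun _ => (1 : Fin 2)) (Sum.inr j) = lam := by
    intro j
    simp [sat, bicliqueElection]
  have hagr : ∀ L' : Finset (Fin ν),
      agreement (bicliqueElection κ E) (L'.image Sum.inl) =
        (univ.filter fun t => ∀ i ∈ L', E i t).card := by
    intro L'
    unfold agreement
    refine congrArg Finset.card (Finset.ext fun t => ?_)
    simp only [Finset.mem_filter, Finset.mem_univ, true_and]
    constructor
    · rintro ⟨p, hp⟩ i hi
      have h := hp (Sum.inl i) (Finset.mem_image_of_mem _ hi)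
      simp only [bicliqueElection] at h
      by_contra hne
      simp [hne] at h
    · intro h
      refine ⟨0, ?_⟩
      rintro x hx
      simp only [Finset.mem_image] at hx
      obtain ⟨i, hi, rfl⟩ := hx
      simp [bicliqueElection, h i hi]
  constructor
  · intro hJR
    rw [JR] at hJR
    push_neg at hJR
    obtain ⟨N', hd, hsat⟩ := hJR
    have hagrpos : 0 < agreement (bicliqueElection κ E) N' := by
      by_contra h
      push_neg at h
      have h0 : agreement (bicliqueElection κ E) N' = 0 := Nat.le_zero.mp h
      rw [demand, h0] at hd
      simp at hd
    have hlam : 0 < lam := by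
      have h2 : agreement (bicliqueElection κ E) N' ≤ lam := by
        unfold agreement
        exact (Finset.card_le_univ _).trans (by simp)
      omega
    have hno : ∀ j : Fin (κ - ν), Sum.inr j ∉ N' := by
      intro j hj
      have h := hsat _ hj
      rw [hsat1] at h
      omega
    set L' : Finset (Fin ν) := univ.filter (fun i => Sum.inl i ∈ N') with hL'
    have hN' : N' = L'.image Sum.inl := by
      ext x
      cases x with
      | inl i => simp [hL']
      | inr j => simp [hL', hno j, fun i => (Sum.inl_ne_inr (a := i) (b := j))]
    refine ⟨L', univ.filter fun t => ∀ i ∈ L', E i t, ?_, ?_⟩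
    · intro i hi t ht
      exact (Finset.mem_filter.mp ht).2 i hi
    · have hd' := hd
      rw [demand, hcard, hN', hagr,
        Finset.card_image_of_injective _ Sum.inl_injective] at hd'
      have h2 : κ ≤ (univ.filter fun t => ∀ i ∈ L', E i t).card * L'.card := by
        by_contra hcon
        push_neg at hcon
        rw [Nat.div_eq_of_lt hcon] at hd'
        exact absurd hd' (lt_irrefl 0)
      rw [mul_comm]
      exact h2
  · rintro ⟨L', R', hE, hge⟩ hJR
    have hL'pos : 0 < L'.card := by
      rcases Nat.eq_zero_or_pos L'.card with h | h
      · simp [h] at hge; omega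
      · exact h
    set N' : Finset (Fin ν ⊕ Fin (κ - ν)) := L'.image Sum.inl with hN'
    have hdem : 0 < demand (bicliqueElection κ E) N' := by
      rw [demand, hcard, hN', hagr]
      apply Nat.div_pos _ hκ0
      calc κ ≤ L'.card * R'.card := hge
        _ ≤ (univ.filter fun t => ∀ i ∈ L', E i t).card * L'.card := by
            rw [mul_comm]
            gcongr
            intro t ht
            simp only [Finset.mem_filter, Finset.mem_univ, true_and]
            exact fun i hi => hE i hi t ht
        _ = _ := by rw [Finset.card_image_of_injective _ Sum.inl_injective, mul_comm]
    obtain ⟨i, hi, hpos⟩ := hJR N' hdem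
    rw [hN'] at hi
    simp only [Finset.mem_image] at hi
    obtain ⟨i', _, rfl⟩ := hi
    rw [hsat0] at hpos
    omega
end
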